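/- arXiv:2302.09796 — 3 statements merged into one kernel-verified Lean document; each statement's English description precedes it below -/
import Mathlib

section
/- When the greedy algorithm (processing elements x_1, …, x_k of X in increasing weight order and adding x_i to S whenever rank(S ∪ {x_i}) > rank(S)) is run, x_i is included in S if and only if rank({x_1, …, x_i}) > rank({x_1, …, x_{i−1}}). -/
/-!
The greedy set after `n` steps is a basis of the prefix `X = {x 0, …, x (n-1)}`. For a basis
`S` of `X`, the rank grows from `X` to `insert a X` exactly when `insert a S` is independent
(by the exchange axiom), and that is also when it grows from `S` to `insert a S`, the test the
greedy algorithm makes. Since later steps only add later elements, `x i` ends up in the output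
iff it was added at step `i`.
-/

open Finset

/-- A matroid on a finite ground set `E`, given by its independence predicate. -/
structure FinMatroid (α : Type*) [DecidableEq α] where
  E : Finset α
  Indep : Finset α → Prop
  indep_subset_ground : ∀ ⦃S : Finset α⦄, Indep S → S ⊆ E
  indep_empty : Indep ∅
  indep_mono : ∀ ⦃S T : Finset α⦄, Indep S → T ⊆ S → Indep T
  indep_exchange : ∀ ⦃S T : Finset α⦄, Indep S → Indep T → S.card < T.card →
    ∃ x ∈ T, x ∉ S ∧ Indep (insert x S)

variable {α : Type*} [DecidableEq α]

/-- The rank of a set `X`: the maximum cardinality of an independent subset of `X`. -/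
noncomputable def FinMatroid.rank (M : FinMatroid α) (X : Finset α) : ℕ :=
  sSup {n : ℕ | ∃ S : Finset α, M.Indep S ∧ S ⊆ X ∧ S.card = n}


/-- The set chosen by the greedy algorithm after processing the first `i`
elements `x 0, …, x (i-1)` (in increasing weight order). -/
noncomputable def greedySet (M : FinMatroid α) (x : ℕ → α) : ℕ → Finset α
  | 0 => ∅
  | i + 1 =>
      if M.rank (greedySet M x i) < M.rank (insert (x i) (greedySet M x i)) then
        insert (x i) (greedySet M x i)
      else greedySet M x i

namespace FinMatroid

variable (M : FinMatroid α)

lemma nonempty_indep_cards (X : Finset α) :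
    {n | ∃ S, M.Indep S ∧ S ⊆ X ∧ S.card = n}.Nonempty :=
  ⟨0, ∅, M.indep_empty, empty_subset X, card_empty⟩

lemma bddAbove_indep_cards (X : Finset α) :
    BddAbove {n | ∃ S, M.Indep S ∧ S ⊆ X ∧ S.card = n} :=
  ⟨X.card, by rintro n ⟨S, -, hSX, rfl⟩; exact card_le_card hSX⟩

lemma card_le_rank {S X : Finset α} (hS : M.Indep S) (hSX : S ⊆ X) : S.card ≤ M.rank X :=
  le_csSup (M.bddAbove_indep_cards X) ⟨S, hS, hSX, rfl⟩

lemma rank_le {X : Finset α} {n : ℕ}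
    (h : ∀ S, M.Indep S → S ⊆ X → S.card ≤ n) : M.rank X ≤ n :=
  csSup_le (M.nonempty_indep_cards X) fun _ ⟨S, hS, hSX, hn⟩ => hn ▸ h S hS hSX

lemma rank_mono {X Y : Finset α} (h : X ⊆ Y) : M.rank X ≤ M.rank Y :=
  M.rank_le fun _ hS hSX => M.card_le_rank hS (hSX.trans h)

lemma rank_insert_le (a : α) (X : Finset α) : M.rank (insert a X) ≤ M.rank X + 1 :=
  M.rank_le fun S hS hSX => by
    have := M.card_le_rank (M.indep_mono hS (erase_subset a S)) (subset_insert_iff.mp hSX)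
    have := pred_card_le_card_erase (s := S) (a := a)
    omega

structure IsBasis (S X : Finset α) : Prop where
  indep : M.Indep S
  subset : S ⊆ X
  card_eq_rank : S.card = M.rank X

lemma exists_isBasis (X : Finset α) : ∃ S, M.IsBasis S X := by
  obtain ⟨S, hS, hSX, hcard⟩ :=
    Nat.sSup_mem (M.nonempty_indep_cards X) (M.bddAbove_indep_cards X)
  exact ⟨S, ⟨hS, hSX, hcard⟩⟩

variable {M}

lemma isBasis_self {S : Finset α} (hS : M.Indep S) : M.IsBasis S S :=
  ⟨hS, Subset.refl S, le_antisymm (M.card_le_rank hS (Subset.refl S))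
    (M.rank_le fun _ _ hT => card_le_card hT)⟩

namespace IsBasis

variable {S X : Finset α} {a : α}

lemma rank_lt_rank_insert_iff (hB : M.IsBasis S X) :
    M.rank X < M.rank (insert a X) ↔ a ∉ S ∧ M.Indep (insert a S) := by
  obtain ⟨hS, hSX, hcard⟩ := hB
  constructor
  · intro hlt
    obtain ⟨T, hT, hTX, hTcard⟩ := M.exists_isBasis (insert a X)
    obtain ⟨y, hyT, hyS, hyS_indep⟩ := M.indep_exchange hS hT (by omega)
    rcases mem_insert.mp (hTX hyT) with rfl | hyX
    · exact ⟨hyS, hyS_indep⟩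
    · have := M.card_le_rank hyS_indep (insert_subset hyX hSX)
      rw [card_insert_of_notMem hyS] at this
      omega
  · rintro ⟨haS, haS_indep⟩
    have := M.card_le_rank haS_indep (insert_subset_insert a hSX)
    rw [card_insert_of_notMem haS] at this
    omega

lemma insert_insert (hB : M.IsBasis S X) (haS : a ∉ S) (haS_indep : M.Indep (insert a S)) :
    M.IsBasis (insert a S) (insert a X) := by
  refine ⟨haS_indep, insert_subset_insert a hB.subset, le_antisymm
    (M.card_le_rank haS_indep (insert_subset_insert a hB.subset)) ?_⟩
  rw [card_insert_of_notMem haS, hB.card_eq_rank]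
  exact M.rank_insert_le a X

lemma insert_right (hB : M.IsBasis S X) (h : ¬ M.rank X < M.rank (insert a X)) :
    M.IsBasis S (insert a X) :=
  ⟨hB.indep, hB.subset.trans (subset_insert a X),
    hB.card_eq_rank.trans (le_antisymm (M.rank_mono (subset_insert a X)) (not_lt.mp h))⟩

end IsBasis

end FinMatroid

open FinMatroid

section Greedy

variable (M : FinMatroid α) (x : ℕ → α)

lemma greedySet_subset_succ (n : ℕ) : greedySet M x n ⊆ greedySet M x (n + 1) := by
  rw [greedySet]
  split_ifs
  exacts [subset_insert _ _, Subset.refl _]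

lemma greedySet_succ_subset_insert (n : ℕ) :
    greedySet M x (n + 1) ⊆ insert (x n) (greedySet M x n) := by
  rw [greedySet]
  split_ifs
  exacts [Subset.refl _, subset_insert _ _]

lemma greedySet_mono : Monotone (greedySet M x) :=
  monotone_nat_of_le_succ (greedySet_subset_succ M x)

lemma greedySet_subset_union_image_Ico {n m : ℕ} (h : n ≤ m) :
    greedySet M x m ⊆ greedySet M x n ∪ (Ico n m).image x := by
  induction m, h using Nat.le_induction with
  | base => simp
  | succ m hnm ih =>
    refine (greedySet_succ_subset_insert M x m).trans (insert_subset ?_ ?_)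
    · exact mem_union_right _ (mem_image_of_mem x (mem_Ico.mpr ⟨hnm, m.lt_succ_self⟩))
    · exact ih.trans (union_subset_union_right
        (image_subset_image (Ico_subset_Ico_right m.le_succ)))

lemma mem_greedySet_succ_iff {n : ℕ} (hn : x n ∉ greedySet M x n) :
    x n ∈ greedySet M x (n + 1) ↔
      M.rank (greedySet M x n) < M.rank (insert (x n) (greedySet M x n)) := by
  rw [greedySet]
  split_ifs with h <;> simp [h, hn]

lemma isBasis_greedySet (n : ℕ) : M.IsBasis (greedySet M x n) ((range n).image x) := by
  induction n with
  | zero => simpa [greedySet] using isBasis_self M.indep_empty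
  | succ n ih =>
    rw [greedySet, range_add_one, image_insert]
    split_ifs with h
    · rw [(isBasis_self ih.indep).rank_lt_rank_insert_iff] at h
      exact ih.insert_insert h.1 h.2
    · rw [(isBasis_self ih.indep).rank_lt_rank_insert_iff, ← ih.rank_lt_rank_insert_iff] at h
      exact ih.insert_right h

end Greedy

theorem greedy_mem_iff_general (M : FinMatroid α) (x : ℕ → α) (k : ℕ)
    (hinj : ∀ i < k, ∀ j < k, x i = x j → i = j)
    (i : ℕ) (hi : i < k) :
    x i ∈ greedySet M x k ↔
      M.rank ((Finset.range i).image x) <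
        M.rank ((Finset.range (i + 1)).image x) := by
  have hB := isBasis_greedySet M x i
  have h_not_before : x i ∉ greedySet M x i := fun h => by
    obtain ⟨j, hj, hji⟩ := mem_image.mp (hB.subset h)
    rw [mem_range] at hj
    exact absurd (hinj j (by omega) i hi hji) (by omega)
  have h_not_after : x i ∉ (Ico (i + 1) k).image x := by
    simp only [mem_image, mem_Ico, not_exists, not_and]
    rintro j ⟨hij, hjk⟩ hji
    exact absurd (hinj j hjk i hi hji) (by omega)
  have h_stable : x i ∈ greedySet M x k ↔ x i ∈ greedySet M x (i + 1) :=
    ⟨fun h => (mem_union.mp (greedySet_subset_union_image_Ico M x hi h)).resolve_right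
      h_not_after, fun h => greedySet_mono M x hi h⟩
  rw [h_stable, mem_greedySet_succ_iff M x h_not_before, range_add_one, image_insert,
    hB.rank_lt_rank_insert_iff, (isBasis_self hB.indep).rank_lt_rank_insert_iff]

/-- In the greedy algorithm, `x i` is included in the output iff adding it to
the prefix `{x 0, …, x (i-1)}` increases the rank of the prefix. -/
theorem greedy_mem_iff (M : FinMatroid α) (w : α → ℝ) (x : ℕ → α) (k : ℕ)
    (hinj : ∀ i < k, ∀ j < k, x i = x j → i = j)
    (hmem : ∀ i < k, x i ∈ M.E)
    (hw : ∀ i j, i < j → j < k → w (x i) < w (x j))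
    (i : ℕ) (hi : i < k) :
    x i ∈ greedySet M x k ↔
      M.rank ((Finset.range i).image x) <
        M.rank ((Finset.range (i + 1)).image x) :=
  greedy_mem_iff_general M x k hinj i hi
end

section
/- If we repeatedly augment a common independent set along shortest augmenting paths in the exchange graph, then after augmenting along a shortest (s,t)-path in G(S) to obtain S', for every element u with d_{G(S)}(s,u) < d_{G(S)}(s,t) it holds that d_{G(S')}(s,u) ≥ d_{G(S)}(s,u). -/
open Finset

variable {α : Type*} [DecidableEq α]

/-- Exchange-graph edges between ground-set elements, for a common independent set `S`. -/
def ExchangeEdge (M1 M2 : FinMatroid α) (S : Finset α) (u v : α) : Prop :=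
  (u ∈ S ∧ v ∉ S ∧ M1.Indep (insert v (S.erase u))) ∨
  (u ∉ S ∧ v ∈ S ∧ M2.Indep (insert u (S.erase v)))

/-- An augmenting path in the exchange graph `G(S)`, recorded by its list of
interior vertices (the endpoints `s`, `t` are implicit). -/
def IsAugPath (M1 M2 : FinMatroid α) (S : Finset α) (p : List α) : Prop :=
  ∃ h : p ≠ [],
    p.Nodup ∧ (∀ a ∈ p, a ∈ M1.E) ∧
    p.head h ∉ S ∧ M1.Indep (insert (p.head h) S) ∧
    p.getLast h ∉ S ∧ M2.Indep (insert (p.getLast h) S) ∧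
    p.Chain' (ExchangeEdge M1 M2 S)

/-- A walk in `G(S)` starting at (a neighbor of) the source `s`, recorded by its
list of ground-set vertices. -/
def PathTo (M1 M2 : FinMatroid α) (S : Finset α) (p : List α) : Prop :=
  ∃ h : p ≠ [], p.head h ∉ S ∧ M1.Indep (insert (p.head h) S) ∧
    p.Chain' (ExchangeEdge M1 M2 S)

/-- `u` lies in the distance layer `L_l` of `G(S)`, i.e. `d(s,u) = l`. -/
def InLayer (M1 M2 : FinMatroid α) (S : Finset α) (u : α) (l : ℕ) : Prop :=
  (∃ p : List α, PathTo M1 M2 S p ∧ p.getLast? = some u ∧ p.length = l) ∧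
  (∀ p : List α, PathTo M1 M2 S p → p.getLast? = some u → l ≤ p.length)

/-- The interior of an `(s,t)`-walk in `G(S)` (not necessarily simple). -/
def IsAugSeq (M1 M2 : FinMatroid α) (S : Finset α) (p : List α) : Prop :=
  PathTo M1 M2 S p ∧
  ∃ h : p ≠ [], p.getLast h ∉ S ∧ M2.Indep (insert (p.getLast h) S)

/-- `dt` is the `(s,t)`-distance in `G(S)`: the shortest `(s,t)`-walk has
`dt - 1` interior vertices. -/
def IsDistST (M1 M2 : FinMatroid α) (S : Finset α) (dt : ℕ) : Prop :=
  (∃ p : List α, IsAugSeq M1 M2 S p ∧ p.length + 1 = dt) ∧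
  (∀ p : List α, IsAugSeq M1 M2 S p → dt ≤ p.length + 1)

/-- An augmenting set `(D 1, …, D (dt-1))` in `G(S)` (CLSSW, Definition 24). -/
def IsAugmentingSet (M1 M2 : FinMatroid α) (S : Finset α) (dt : ℕ)
    (D : ℕ → Finset α) : Prop :=
  (∀ l, 1 ≤ l → l < dt → ∀ u ∈ D l, InLayer M1 M2 S u l) ∧
  (∀ l l', 1 ≤ l → l < dt → 1 ≤ l' → l' < dt → (D l).card = (D l').card) ∧
  M1.Indep (S ∪ D 1) ∧
  M2.Indep (S ∪ D (dt - 1)) ∧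
  (∀ l, 1 ≤ l → l < dt - 1 → Even l → M1.Indep ((S \ D l) ∪ D (l + 1))) ∧
  (∀ l, 1 ≤ l → l < dt - 1 → Odd l → M2.Indep ((S \ D (l + 1)) ∪ D l))

/-- The union `D 1 ∪ ⋯ ∪ D (dt - 1)` of the layers of an augmenting set. -/
def AugUnion (dt : ℕ) (D : ℕ → Finset α) : Finset α :=
  (Finset.Icc 1 (dt - 1)).biUnion D

/-!
Write `d` for distances from `s` in `G(S)` and `S' = S ⊕ P`. As `P` is a shortest
`(s,t)`-path it is also a shortest `(s,t)`-walk, so its `j`-th vertex `p_j` has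
`d(p_j) = j + 1`. By induction along a walk of `G(S')` it suffices to show that an
out-neighbour `y` of `s` in `G(S')` has `d(y) ≤ 1`, and that an arc `x → y` of `G(S')` with
`d(x) ≤ δ < |P|` has `d(y) ≤ δ + 1`.

For an `M1`-arc (`S' - x + y` independent in `M1`) suppose `d(y) > δ + 1`. Every `e ∉ S` with
`d(e) > δ + 1` is spanned in `M1` by `F = {z ∈ S | d(z) > δ}`, since an exchange `z → e` with
`z ∈ S \ F` would give `d(e) ≤ δ + 1`. Hence the independent set
`{y} ∪ (F \ P) ∪ {v ∈ P \ S | d(v) > δ + 1} ⊆ S' - x + y` has at most `|F|` elements, but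
`p_j ↦ p_{j+1}` maps `F ∩ P` injectively into its last part. An `M2`-arc is handled dually,
with `F = {z ∈ S | d(z) ≤ δ + 1}`, `{v ∈ P \ S | d(v) ≤ δ}` and `p_j ↦ p_{j-1}`; there
`δ < |P|` ensures that no vertex at distance `≤ δ` is a sink. The arcs out of `s` are the
`M1` case with `δ = 0`.
-/

namespace FinMatroid

variable (M : FinMatroid α)

theorem exists_indep_superset_card_eq {A C : Finset α} (hA : M.Indep A) (hC : M.Indep C)
    (hAC : A.card ≤ C.card) : ∃ B, A ⊆ B ∧ B ⊆ A ∪ C ∧ M.Indep B ∧ B.card = C.card := by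
  induction h : C.card - A.card generalizing A with
  | zero => exact ⟨A, subset_rfl, subset_union_left, hA, by omega⟩
  | succ n ih =>
    obtain ⟨x, hxC, hxA, hAx⟩ := M.indep_exchange hA hC (by omega)
    have hcard := card_insert_of_notMem hxA
    obtain ⟨B, hAB, hBAC, hB, hBC⟩ := ih hAx (by omega) (by omega)
    refine ⟨B, (subset_insert x A).trans hAB, hBAC.trans ?_, hB, hBC⟩
    rw [insert_union]
    exact insert_subset (mem_union_right A hxC) subset_rfl

/-- `hspan` says that every element of `I \ F` is spanned by `F`. -/
theorem card_le_of_forall_not_indep_exchange {C F I : Finset α} (hC : M.Indep C)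
    (hFC : F ⊆ C) (hI : M.Indep I)
    (hspan : ∀ e ∈ I, e ∉ F → ¬ M.Indep (insert e C) ∧
      ∀ z ∈ C, z ∉ F → ¬ M.Indep (insert e (C.erase z))) :
    I.card ≤ F.card := by
  by_contra! hFI
  obtain ⟨e, heI, heF, hFe⟩ := M.indep_exchange (M.indep_mono hC hFC) hI hFI
  obtain ⟨hCe, hexch⟩ := hspan e heI heF
  have heC : e ∉ C := fun heC => hexch e heC heF (by rwa [insert_erase heC])
  have hcardFe := card_insert_of_notMem heF
  rcases lt_or_ge C.card (insert e F).card with hlt | hle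
  · obtain ⟨x, hx, hxC, hCx⟩ := M.indep_exchange hC hFe hlt
    obtain rfl | hxF := mem_insert.1 hx
    · exact hCe hCx
    · exact hxC (hFC hxF)
  obtain ⟨B, hFeB, hBC, hB, hBcard⟩ := M.exists_indep_superset_card_eq hFe hC hle
  rw [insert_union, union_eq_right.2 hFC] at hBC
  have heB : e ∈ B := hFeB (mem_insert_self e F)
  obtain ⟨z, hzC, hzB⟩ : ∃ z ∈ C, z ∉ B.erase e := exists_mem_notMem_of_card_lt_card (by
    rw [card_erase_of_mem heB]; have := card_pos.2 ⟨e, heB⟩; omega)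
  have hzB' : z ∉ B := fun hz => hzB (mem_erase.2 ⟨fun h => heC (h ▸ hzC), hz⟩)
  have hBsub : B ⊆ insert e (C.erase z) := fun b hb => by
    obtain rfl | hbC := mem_insert.1 (hBC hb)
    · exact mem_insert_self b _
    · exact mem_insert_of_mem (mem_erase.2 ⟨fun h => hzB' (h ▸ hb), hbC⟩)
  refine hexch z hzC (fun hzF => hzB' (hFeB (mem_insert_of_mem hzF))) ?_
  rwa [← eq_of_subset_of_card_le hBsub (by
    rw [card_insert_of_notMem (fun h => heC (mem_of_mem_erase h)), card_erase_of_mem hzC]; omega)]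

end FinMatroid

namespace List

variable {β : Type*} {R : β → β → Prop}

theorem IsChain.exists_shorter_of_not_nodup {l : List β} (hl : l.IsChain R) (hnd : ¬ l.Nodup) :
    ∃ l' : List β, l'.IsChain R ∧ l'.head? = l.head? ∧ l'.getLast? = l.getLast? ∧
      l'.length < l.length := by
  induction l with
  | nil => exact absurd nodup_nil hnd
  | cons a t ih =>
    by_cases hat : a ∈ t
    · obtain ⟨t₁, t₂, rfl⟩ := append_of_mem hat
      refine ⟨a :: t₂, (isChain_cons_split.1 hl).2, rfl, ?_, by simp⟩
      simp [getLast?_cons, getLast?_append]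
    · obtain ⟨t', ht', hhead, hlast, hlen⟩ := ih hl.tail (by simp_all)
      refine ⟨a :: t', ht'.cons (hhead ▸ hl.rel_head?), rfl, ?_, by simpa⟩
      simp [getLast?_cons, hlast]

variable [DecidableEq β]

theorem Nodup.card_filter_le_of_getElem {l : List β} (hl : l.Nodup) {Q Q' : β → Prop}
    [DecidablePred Q] [DecidablePred Q'] (f : ℕ → ℕ)
    (hf : ∀ j (hj : j < l.length), Q l[j] → ∃ hfj : f j < l.length, Q' l[f j])
    (hinj : ∀ i j (hi : i < l.length) (hj : j < l.length), Q l[i] → Q l[j] → f i = f j → i = j) :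
    (l.toFinset.filter Q).card ≤ (l.toFinset.filter Q').card := by
  have hidx : ∀ v ∈ l.toFinset.filter Q, ∃ hj : l.idxOf v < l.length, l[l.idxOf v] = v ∧
      Q l[l.idxOf v] := fun v hv => by
    obtain ⟨hvl, hQ⟩ := Finset.mem_filter.1 hv
    have hj := idxOf_lt_length_iff.2 (mem_toFinset.1 hvl)
    exact ⟨hj, getElem_idxOf hj, (getElem_idxOf hj).symm ▸ hQ⟩
  refine card_le_card_of_injOn (fun v => l.getD (f (l.idxOf v)) v) (fun v hv => ?_) ?_
  · obtain ⟨hj, -, hQ⟩ := hidx v hv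
    obtain ⟨hfj, hQ'⟩ := hf _ hj hQ
    simp only [Finset.mem_coe, Finset.mem_filter, getD_eq_getElem _ _ hfj]
    exact ⟨mem_toFinset.2 (getElem_mem hfj), hQ'⟩
  · intro v hv w hw hvw
    obtain ⟨hi, hv', hQv⟩ := hidx v hv
    obtain ⟨hj, hw', hQw⟩ := hidx w hw
    obtain ⟨hfi, -⟩ := hf _ hi hQv
    obtain ⟨hfj, -⟩ := hf _ hj hQw
    simp only [getD_eq_getElem _ _ hfi, getD_eq_getElem _ _ hfj, hl.getElem_inj_iff] at hvw
    rw [← hv', ← hw']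
    simp only [hinj _ _ hi hj hQv hQw hvw]

end List

theorem Finset.card_lt_card_insert_sdiff_union {F H P : Finset α}
    {y : α} (hFH : Disjoint F H) (hy : y ∉ F \ P ∪ H) (hFP : (F ∩ P).card ≤ H.card) :
    F.card < (insert y (F \ P ∪ H)).card := by
  rw [card_insert_of_notMem hy,
    card_union_of_disjoint (disjoint_of_subset_left sdiff_subset hFH)]
  have := card_sdiff_add_card_inter F P
  omega

theorem Finset.sdiff_union_subset_symmDiff {F H S P : Finset α}
    (hFS : F ⊆ S) (hHP : H ⊆ P \ S) : F \ P ∪ H ⊆ symmDiff S P := by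
  rw [symmDiff_def]
  exact union_subset_union (sdiff_subset_sdiff hFS le_rfl) hHP

section ExchangeGraph

variable {M1 M2 : FinMatroid α} {S : Finset α}

open scoped Classical

/-- `d_{G(S)}(s, w) ≤ n`; a walk is counted by its vertices after `s`. -/
def ReachWithin (M1 M2 : FinMatroid α) (S : Finset α) (n : ℕ) (w : α) : Prop :=
  ∃ r : List α, PathTo M1 M2 S r ∧ r.getLast? = some w ∧ r.length ≤ n

theorem pathTo_iff {q : List α} : PathTo M1 M2 S q ↔
    (∃ a ∈ q.head?, a ∉ S ∧ M1.Indep (insert a S)) ∧ q.IsChain (ExchangeEdge M1 M2 S) := by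
  cases q with
  | nil => simp [PathTo]
  | cons a t =>
    refine ⟨fun ⟨_, haS, haI, hc⟩ => ⟨⟨a, rfl, haS, haI⟩, hc⟩, ?_⟩
    rintro ⟨⟨_, ⟨⟩, haS, haI⟩, hc⟩
    exact ⟨List.cons_ne_nil a t, haS, haI, hc⟩

theorem isAugSeq_iff {q : List α} : IsAugSeq M1 M2 S q ↔
    PathTo M1 M2 S q ∧ ∃ b ∈ q.getLast?, b ∉ S ∧ M2.Indep (insert b S) := by
  refine and_congr_right fun hq => ?_
  simp [List.getLast?_eq_some_getLast hq.1, hq.1]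

theorem isAugPath_iff {q : List α} : IsAugPath M1 M2 S q ↔
    q.Nodup ∧ (∀ a ∈ q, a ∈ M1.E) ∧ IsAugSeq M1 M2 S q := by
  simp only [IsAugPath, IsAugSeq, PathTo]
  constructor
  · rintro ⟨hq, hnd, hE, h1, h2, h3, h4, hc⟩
    exact ⟨hnd, hE, ⟨hq, h1, h2, hc⟩, hq, h3, h4⟩
  · rintro ⟨hnd, hE, ⟨hq, h1, h2, hc⟩, _, h3, h4⟩
    exact ⟨hq, hnd, hE, h1, h2, h3, h4, hc⟩

theorem ReachWithin.mono {m n : ℕ} {w : α} (hmn : m ≤ n) (h : ReachWithin M1 M2 S m w) :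
    ReachWithin M1 M2 S n w :=
  let ⟨r, hr, hlast, hlen⟩ := h
  ⟨r, hr, hlast, hlen.trans hmn⟩

theorem reachWithin_one {w : α} (hw : w ∉ S) (hI : M1.Indep (insert w S)) :
    ReachWithin M1 M2 S 1 w :=
  ⟨[w], pathTo_iff.2 ⟨⟨w, rfl, hw, hI⟩, List.isChain_singleton w⟩, rfl, le_rfl⟩

theorem ReachWithin.succ {n : ℕ} {z w : α} (h : ReachWithin M1 M2 S n z)
    (hzw : ExchangeEdge M1 M2 S z w) : ReachWithin M1 M2 S (n + 1) w := by
  obtain ⟨r, hr, hlast, hlen⟩ := h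
  obtain ⟨⟨a, ha, haS, haI⟩, hc⟩ := pathTo_iff.1 hr
  refine ⟨r ++ [w], pathTo_iff.2 ⟨⟨a, ?_, haS, haI⟩, ?_⟩, List.getLast?_concat, by simpa⟩
  · rwa [List.head?_append_of_ne_nil r hr.1]
  · exact List.isChain_append.2 ⟨hc, List.isChain_singleton w, by simp_all⟩

theorem PathTo.mem_ground (hS1 : M1.Indep S) {q : List α} (hq : PathTo M1 M2 S q) :
    ∀ a ∈ q, a ∈ M1.E := by
  obtain ⟨hne, -, hI, hc⟩ := hq
  refine hc.induction _ _ (fun x y hxy _ => ?_)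
    (fun _ => M1.indep_subset_ground hI (mem_insert_self _ S))
  rcases hxy with ⟨-, -, hI'⟩ | ⟨-, hyS, -⟩
  · exact M1.indep_subset_ground hI' (mem_insert_self y _)
  · exact M1.indep_subset_ground hS1 hyS

/-- A shortest walk has no repeated vertex, so it is itself an augmenting path. -/
theorem length_le_of_isAugSeq_of_forall_isAugPath (hS1 : M1.Indep S) {n : ℕ}
    (hshort : ∀ q : List α, IsAugPath M1 M2 S q → n ≤ q.length) :
    ∀ q : List α, IsAugSeq M1 M2 S q → n ≤ q.length := by
  intro q hq
  induction hlen : q.length using Nat.strong_induction_on generalizing q with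
  | _ m ih =>
  by_cases hnd : q.Nodup
  · exact hlen ▸ hshort q (isAugPath_iff.2 ⟨hnd, hq.1.mem_ground hS1, hq⟩)
  obtain ⟨hq', ⟨b, hb, hbS, hbI⟩⟩ := isAugSeq_iff.1 hq
  obtain ⟨⟨a, ha, haS, haI⟩, hc⟩ := pathTo_iff.1 hq'
  obtain ⟨q', hc', hhead, hlast, hlt⟩ := hc.exists_shorter_of_not_nodup hnd
  have hq'' : IsAugSeq M1 M2 S q' := isAugSeq_iff.2
    ⟨pathTo_iff.2 ⟨⟨a, hhead ▸ ha, haS, haI⟩, hc'⟩, b, hlast ▸ hb, hbS, hbI⟩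
  exact (ih _ (hlen ▸ hlt) q' hq'' rfl).trans (hlen ▸ hlt.le)

theorem ExchangeEdge.mem_iff_notMem {u v : α} (h : ExchangeEdge M1 M2 S u v) :
    v ∈ S ↔ u ∉ S := by
  rcases h with ⟨hu, hv, -⟩ | ⟨hu, hv, -⟩ <;> simp [hu, hv]

theorem ReachWithin.length_le_of_indep_insert {m n : ℕ} {w : α}
    (hmin : ∀ q : List α, IsAugSeq M1 M2 S q → m ≤ q.length)
    (hr : ReachWithin M1 M2 S n w) (hw : w ∉ S) (hI : M2.Indep (insert w S)) : m ≤ n :=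
  let ⟨r, hr, hlast, hlen⟩ := hr
  (hmin r (isAugSeq_iff.2 ⟨hr, w, hlast, hw, hI⟩)).trans hlen

namespace IsAugPath

variable {p : List α}

theorem isAugSeq (hp : IsAugPath M1 M2 S p) : IsAugSeq M1 M2 S p := (isAugPath_iff.1 hp).2.2

theorem getElem_mem_iff (hp : IsAugPath M1 M2 S p) {j : ℕ} (hj : j < p.length) :
    p[j] ∈ S ↔ Odd j := by
  obtain ⟨hne, -, -, hhead, -, -, -, hc⟩ := hp
  induction j with
  | zero => simpa [List.head_eq_getElem] using hhead
  | succ j ih =>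
    rw [(hc.getElem j hj).mem_iff_notMem, ih (by omega), Nat.odd_add_one]

theorem succ_lt_length_of_getElem_mem (hp : IsAugPath M1 M2 S p) {j : ℕ} (hj : j < p.length)
    (hjS : p[j] ∈ S) : j + 1 < p.length := by
  obtain ⟨hne, -, -, -, -, hlast, -, -⟩ := hp
  by_contra! hjlen
  rw [List.getLast_eq_getElem] at hlast
  exact hlast (by convert hjS using 2; omega)

theorem reachWithin_getElem (hp : IsAugPath M1 M2 S p) {j : ℕ} (hj : j < p.length) :
    ReachWithin M1 M2 S (j + 1) p[j] := by
  obtain ⟨hne, -, -, hhead, hheadI, -, -, hc⟩ := hp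
  induction j with
  | zero => simp only [List.head_eq_getElem] at hhead hheadI; exact reachWithin_one hhead hheadI
  | succ j ih => exact (ih (by omega)).succ (hc.getElem j hj)

/-- Otherwise a shortcut to `p[j]` followed by the rest of `p` is a shorter `(s,t)`-walk. -/
theorem not_reachWithin_getElem (hp : IsAugPath M1 M2 S p)
    (hmin : ∀ q : List α, IsAugSeq M1 M2 S q → p.length ≤ q.length) {j : ℕ}
    (hj : j < p.length) : ¬ ReachWithin M1 M2 S j p[j] := by
  rintro ⟨r, hr, hrlast, hrlen⟩
  obtain ⟨hp', b, hb, hbS, hbI⟩ := isAugSeq_iff.1 hp.isAugSeq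
  obtain ⟨⟨a, ha, haS, haI⟩, hrc⟩ := pathTo_iff.1 hr
  have hpc := (pathTo_iff.1 hp').2.drop j
  rw [List.drop_eq_getElem_cons hj] at hpc
  have hwalk : IsAugSeq M1 M2 S (r ++ p.drop (j + 1)) := by
    refine isAugSeq_iff.2 ⟨pathTo_iff.2 ⟨⟨a, ?_, haS, haI⟩, ?_⟩, b, ?_, hbS, hbI⟩
    · rwa [List.head?_append_of_ne_nil r hr.1]
    · refine List.isChain_append.2 ⟨hrc, hpc.tail, ?_⟩
      simpa [hrlast] using hpc.rel_head?
    · rw [List.getLast?_append, List.getLast?_drop]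
      split_ifs with hlen
      · rw [List.getLast?_eq_getElem?, List.getElem?_eq_getElem (by omega)] at hb
        simpa [hrlast, show j = p.length - 1 by omega] using hb
      · simp [Option.mem_def.1 hb]
  have := hmin _ hwalk
  simp only [List.length_append, List.length_drop] at this
  omega

theorem reachWithin_getElem_iff (hp : IsAugPath M1 M2 S p)
    (hmin : ∀ q : List α, IsAugSeq M1 M2 S q → p.length ≤ q.length) {n j : ℕ}
    (hj : j < p.length) : ReachWithin M1 M2 S n p[j] ↔ j + 1 ≤ n := by
  refine ⟨fun h => ?_, fun h => (hp.reachWithin_getElem hj).mono h⟩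
  by_contra! hn
  exact hp.not_reachWithin_getElem hmin hj (h.mono (by omega))

theorem card_filter_not_reachWithin_inter_le (hp : IsAugPath M1 M2 S p)
    (hmin : ∀ q : List α, IsAugSeq M1 M2 S q → p.length ≤ q.length) (δ : ℕ) :
    (S.filter (¬ ReachWithin M1 M2 S δ ·) ∩ p.toFinset).card ≤
      ((p.toFinset \ S).filter (¬ ReachWithin M1 M2 S (δ + 1) ·)).card := by
  rw [show S.filter _ ∩ p.toFinset =
      p.toFinset.filter (fun v => v ∈ S ∧ ¬ ReachWithin M1 M2 S δ v) by ext; simp; tauto,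
    show (p.toFinset \ S).filter _ =
      p.toFinset.filter (fun v => v ∉ S ∧ ¬ ReachWithin M1 M2 S (δ + 1) v) by ext; simp; tauto]
  refine (isAugPath_iff.1 hp).1.card_filter_le_of_getElem (· + 1)
    (fun j hj ⟨hjS, hjr⟩ => ⟨hp.succ_lt_length_of_getElem_mem hj hjS, ?_, ?_⟩) (by intros; omega)
  · rw [hp.getElem_mem_iff, Nat.odd_add_one, not_not]
    exact (hp.getElem_mem_iff hj).1 hjS
  · rw [hp.reachWithin_getElem_iff hmin] at hjr ⊢
    omega

theorem card_filter_reachWithin_inter_le (hp : IsAugPath M1 M2 S p)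
    (hmin : ∀ q : List α, IsAugSeq M1 M2 S q → p.length ≤ q.length) (δ : ℕ) :
    (S.filter (ReachWithin M1 M2 S (δ + 1) ·) ∩ p.toFinset).card ≤
      ((p.toFinset \ S).filter (ReachWithin M1 M2 S δ ·)).card := by
  rw [show S.filter _ ∩ p.toFinset =
      p.toFinset.filter (fun v => v ∈ S ∧ ReachWithin M1 M2 S (δ + 1) v) by ext; simp; tauto,
    show (p.toFinset \ S).filter _ =
      p.toFinset.filter (fun v => v ∉ S ∧ ReachWithin M1 M2 S δ v) by ext; simp; tauto]
  have hodd : ∀ j (hj : j < p.length), p[j] ∈ S → 1 ≤ j := fun j hj hjS => by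
    obtain ⟨k, rfl⟩ := (hp.getElem_mem_iff hj).1 hjS
    omega
  refine (isAugPath_iff.1 hp).1.card_filter_le_of_getElem (· - 1) (fun j hj ⟨hjS, hjr⟩ => ?_)
    (fun i j hi hj ⟨hiS, _⟩ ⟨hjS, _⟩ => by have := hodd i hi hiS; have := hodd j hj hjS; omega)
  have hj1 := hodd j hj hjS
  refine ⟨by omega, ?_, ?_⟩
  · rw [hp.getElem_mem_iff, ← Nat.odd_add_one, Nat.sub_add_cancel hj1]
    exact (hp.getElem_mem_iff hj).1 hjS
  · rw [hp.reachWithin_getElem_iff hmin] at hjr ⊢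
    omega

theorem reachWithin_succ_of_indep₁_insert (hS1 : M1.Indep S) (hp : IsAugPath M1 M2 S p)
    (hmin : ∀ q : List α, IsAugSeq M1 M2 S q → p.length ≤ q.length) {δ : ℕ} {y : α}
    (hy : y ∉ symmDiff S p.toFinset)
    (hI : M1.Indep (insert y (S.filter (¬ ReachWithin M1 M2 S δ ·) \ p.toFinset ∪
      (p.toFinset \ S).filter (¬ ReachWithin M1 M2 S (δ + 1) ·)))) :
    ReachWithin M1 M2 S (δ + 1) y := by
  by_contra hyr
  have hsub := sdiff_union_subset_symmDiff (filter_subset (¬ ReachWithin M1 M2 S δ ·) S)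
    (filter_subset (¬ ReachWithin M1 M2 S (δ + 1) ·) (p.toFinset \ S))
  have hdisj : Disjoint (S.filter (¬ ReachWithin M1 M2 S δ ·))
      ((p.toFinset \ S).filter (¬ ReachWithin M1 M2 S (δ + 1) ·)) :=
    disjoint_filter_filter disjoint_sdiff
  refine (card_lt_card_insert_sdiff_union hdisj (fun h => hy (hsub h))
    (hp.card_filter_not_reachWithin_inter_le hmin δ)).not_ge
    (M1.card_le_of_forall_not_indep_exchange hS1 (filter_subset _ S) hI fun e he heF => ?_)
  obtain ⟨heS, her⟩ : e ∉ S ∧ ¬ ReachWithin M1 M2 S (δ + 1) e := by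
    rcases mem_insert.1 he with rfl | he
    · exact ⟨fun heS => heF (mem_filter.2 ⟨heS, fun h => hyr (h.mono δ.le_succ)⟩), hyr⟩
    rcases mem_union.1 he with he | he
    · exact absurd (mem_sdiff.1 he).1 heF
    · simp only [mem_filter, mem_sdiff] at he
      exact ⟨he.1.2, he.2⟩
  refine ⟨fun hI => her ((reachWithin_one heS hI).mono (by omega)), fun z hzS hzF hI => her ?_⟩
  have hz : ReachWithin M1 M2 S δ z := by_contra fun h => hzF (mem_filter.2 ⟨hzS, h⟩)
  exact hz.succ (Or.inl ⟨hzS, heS, hI⟩)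

theorem reachWithin_one_of_indep₁_insert (hS1 : M1.Indep S) (hp : IsAugPath M1 M2 S p)
    (hmin : ∀ q : List α, IsAugSeq M1 M2 S q → p.length ≤ q.length) {y : α}
    (hy : y ∉ symmDiff S p.toFinset) (hI : M1.Indep (insert y (symmDiff S p.toFinset))) :
    ReachWithin M1 M2 S 1 y :=
  hp.reachWithin_succ_of_indep₁_insert hS1 hmin (δ := 0) hy <| M1.indep_mono hI <|
    insert_subset_insert y (sdiff_union_subset_symmDiff (filter_subset _ S) (filter_subset _ _))

theorem reachWithin_succ_of_indep₁_insert_erase (hS1 : M1.Indep S) (hp : IsAugPath M1 M2 S p)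
    (hmin : ∀ q : List α, IsAugSeq M1 M2 S q → p.length ≤ q.length) {δ : ℕ} {x y : α}
    (hy : y ∉ symmDiff S p.toFinset)
    (hI : M1.Indep (insert y ((symmDiff S p.toFinset).erase x)))
    (hx : ReachWithin M1 M2 S δ x) : ReachWithin M1 M2 S (δ + 1) y := by
  refine hp.reachWithin_succ_of_indep₁_insert hS1 hmin hy (M1.indep_mono hI
    (insert_subset_insert y (subset_erase.2 ⟨sdiff_union_subset_symmDiff
      (filter_subset _ S) (filter_subset _ _), fun hx' => ?_⟩)))
  rcases mem_union.1 hx' with hx' | hx'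
  · exact (mem_filter.1 (mem_sdiff.1 hx').1).2 hx
  · exact (mem_filter.1 hx').2 (hx.mono δ.le_succ)

theorem reachWithin_succ_of_indep₂_insert_erase (hS2 : M2.Indep S) (hp : IsAugPath M1 M2 S p)
    (hmin : ∀ q : List α, IsAugSeq M1 M2 S q → p.length ≤ q.length) {δ : ℕ} {x y : α}
    (hx : x ∉ symmDiff S p.toFinset)
    (hI : M2.Indep (insert x ((symmDiff S p.toFinset).erase y)))
    (hxr : ReachWithin M1 M2 S δ x) (hδ : δ < p.length) : ReachWithin M1 M2 S (δ + 1) y := by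
  by_contra hyr
  have hsub := sdiff_union_subset_symmDiff (filter_subset (ReachWithin M1 M2 S (δ + 1) ·) S)
    (filter_subset (ReachWithin M1 M2 S δ ·) (p.toFinset \ S))
  have hdisj : Disjoint (S.filter (ReachWithin M1 M2 S (δ + 1) ·))
      ((p.toFinset \ S).filter (ReachWithin M1 M2 S δ ·)) :=
    disjoint_filter_filter disjoint_sdiff
  have hI' := M2.indep_mono hI (insert_subset_insert x (subset_erase.2 ⟨hsub, fun hy => by
    rcases mem_union.1 hy with hy | hy
    · exact hyr (mem_filter.1 (mem_sdiff.1 hy).1).2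
    · exact hyr ((mem_filter.1 hy).2.mono δ.le_succ)⟩))
  refine (card_lt_card_insert_sdiff_union hdisj (fun h => hx (hsub h))
    (hp.card_filter_reachWithin_inter_le hmin δ)).not_ge
    (M2.card_le_of_forall_not_indep_exchange hS2 (filter_subset _ S) hI' fun e he heF => ?_)
  obtain ⟨heS, her⟩ : e ∉ S ∧ ReachWithin M1 M2 S δ e := by
    rcases mem_insert.1 he with rfl | he
    · exact ⟨fun heS => heF (mem_filter.2 ⟨heS, hxr.mono δ.le_succ⟩), hxr⟩
    rcases mem_union.1 he with he | he
    · exact absurd (mem_sdiff.1 he).1 heF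
    · simp only [mem_filter, mem_sdiff] at he
      exact ⟨he.1.2, he.2⟩
  exact ⟨fun hI => (her.length_le_of_indep_insert hmin heS hI).not_gt hδ,
    fun z hzS hzF hI => hzF (mem_filter.2 ⟨hzS, her.succ (Or.inr ⟨heS, hzS, hI⟩)⟩)⟩

theorem reachWithin_succ_of_exchangeEdge (hS1 : M1.Indep S) (hS2 : M2.Indep S)
    (hp : IsAugPath M1 M2 S p)
    (hmin : ∀ q : List α, IsAugSeq M1 M2 S q → p.length ≤ q.length) {δ : ℕ} {x y : α}
    (hxy : ExchangeEdge M1 M2 (symmDiff S p.toFinset) x y) (hx : ReachWithin M1 M2 S δ x)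
    (hδ : δ < p.length) : ReachWithin M1 M2 S (δ + 1) y := by
  rcases hxy with ⟨-, hy, hI⟩ | ⟨hx', -, hI⟩
  · exact hp.reachWithin_succ_of_indep₁_insert_erase hS1 hmin hy hI hx
  · exact hp.reachWithin_succ_of_indep₂_insert_erase hS2 hmin hx' hI hx hδ

theorem reachWithin_of_pathTo_symmDiff (hS1 : M1.Indep S) (hS2 : M2.Indep S)
    (hp : IsAugPath M1 M2 S p)
    (hmin : ∀ q : List α, IsAugSeq M1 M2 S q → p.length ≤ q.length) :
    ∀ q : List α, PathTo M1 M2 (symmDiff S p.toFinset) q → q.length ≤ p.length →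
      ∀ w ∈ q.getLast?, ReachWithin M1 M2 S q.length w := by
  intro q
  induction q using List.reverseRecOn with
  | nil => exact fun hq => absurd rfl hq.1
  | append_singleton r w ih =>
    intro hq hlen w' hw'
    obtain rfl : w = w' := by simpa using hw'
    obtain ⟨⟨a, ha, haS, haI⟩, hc⟩ := pathTo_iff.1 hq
    rw [List.length_append, List.length_singleton] at hlen ⊢
    rcases eq_or_ne r [] with rfl | hr
    · obtain rfl : a = w := by simpa using ha.symm
      exact hp.reachWithin_one_of_indep₁_insert hS1 hmin haS haI
    obtain ⟨hrc, -, hedge⟩ := List.isChain_append.1 hc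
    have hr' : PathTo M1 M2 (symmDiff S p.toFinset) r :=
      pathTo_iff.2 ⟨⟨a, by rwa [List.head?_append_of_ne_nil r hr] at ha, haS, haI⟩, hrc⟩
    have hlast := List.getLast?_eq_some_getLast hr
    exact hp.reachWithin_succ_of_exchangeEdge hS1 hS2 hmin (hedge _ hlast w rfl)
      (ih hr' (by omega) _ hlast) (by omega)

end IsAugPath

end ExchangeGraph

theorem dist_monotone_general (M1 M2 : FinMatroid α)
    (S : Finset α) (hS1 : M1.Indep S) (hS2 : M2.Indep S)
    (p : List α) (hp : IsAugPath M1 M2 S p)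
    (hshort : ∀ q : List α, IsAugPath M1 M2 S q → p.length ≤ q.length)
    (dt : ℕ) (hdt : IsDistST M1 M2 S dt)
    (u : α) (l : ℕ) (hu : InLayer M1 M2 S u l) (hl : l < dt) :
    ∀ q : List α, PathTo M1 M2 (symmDiff S p.toFinset) q →
      q.getLast? = some u → l ≤ q.length := by
  intro q hq hlast
  have hmin := length_le_of_isAugSeq_of_forall_isAugPath hS1 hshort
  have hlp : l ≤ p.length := by have := hdt.2 p hp.isAugSeq; omega
  by_cases hqp : q.length ≤ p.length
  · obtain ⟨r, hr, hrlast, hrlen⟩ :=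
      hp.reachWithin_of_pathTo_symmDiff hS1 hS2 hmin q hq hqp u hlast
    exact (hu.2 r hr hrlast).trans hrlen
  · omega

/-- Monotonicity of distances: after augmenting along a shortest `(s,t)`-path,
for every `u` with `d(s,u) < d(s,t)` the distance from `s` to `u` does not
decrease. -/
theorem dist_monotone (M1 M2 : FinMatroid α) (hE : M1.E = M2.E)
    (S : Finset α) (hS1 : M1.Indep S) (hS2 : M2.Indep S)
    (p : List α) (hp : IsAugPath M1 M2 S p)
    (hshort : ∀ q : List α, IsAugPath M1 M2 S q → p.length ≤ q.length)
    (dt : ℕ) (hdt : IsDistST M1 M2 S dt)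
    (u : α) (l : ℕ) (hu : InLayer M1 M2 S u l) (hl : l < dt) :
    ∀ q : List α, PathTo M1 M2 (symmDiff S p.toFinset) q →
      q.getLast? = some u → l ≤ q.length :=
  dist_monotone_general M1 M2 S hS1 hS2 p hp hshort dt hdt u l hu hl
end

section
/- In a matroid, if S is independent, u, y ∈ U \ S, R ⊆ U \ S with R ∪ {u} dependent over S in the sense that rank(S' ∪ R ∪ {u}) = rank(S' ∪ R) where S' = S \ {x} for some x ∈ S, and there exists an exchange edge from u to x (i.e., S − x + u ∈ I), then there exists v ∈ R with S − x + v ∈ I. -/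
/-!
If no `v ∈ R` extends `S - x`, then `S - x` is a maximal independent subset of `(S - x) ∪ R`,
so that set has rank `|S - x|`. But `S - x + u` is independent of size `|S - x| + 1` inside
`(S - x) ∪ R ∪ {u}`, whose rank would then exceed that of `(S - x) ∪ R`.
-/

open Finset

variable {α : Type*} [DecidableEq α]

namespace FinMatroid

variable (M : FinMatroid α)

theorem bddAbove_card_indep_subset (X : Finset α) :
    BddAbove {n : ℕ | ∃ T : Finset α, M.Indep T ∧ T ⊆ X ∧ T.card = n} := by
  refine ⟨X.card, ?_⟩
  rintro n ⟨T, -, hTX, rfl⟩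
  exact card_le_card hTX

variable {M}

theorem card_le_rank_s15 {T X : Finset α} (hT : M.Indep T) (hTX : T ⊆ X) :
    T.card ≤ M.rank X :=
  le_csSup (M.bddAbove_card_indep_subset X) ⟨T, hT, hTX, rfl⟩

theorem rank_le_card_of_maximal {I X : Finset α} (hI : M.Indep I) (hIX : I ⊆ X)
    (hmax : ∀ v ∈ X, v ∉ I → ¬M.Indep (insert v I)) : M.rank X ≤ I.card := by
  refine csSup_le ⟨I.card, I, hI, hIX, rfl⟩ ?_
  rintro n ⟨T, hT, hTX, rfl⟩
  by_contra! hlt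
  obtain ⟨v, hvT, hvI, hvind⟩ := M.indep_exchange hI hT hlt
  exact hmax v (hTX hvT) hvI hvind

end FinMatroid

theorem span_exchange_general (M : FinMatroid α) (S : Finset α)
    (x : α) (u : α) (huS : u ∉ S)
    (hedge : M.Indep (insert u (S.erase x)))
    (R : Finset α)
    (hspan : M.rank (S.erase x ∪ R ∪ {u}) = M.rank (S.erase x ∪ R)) :
    ∃ v ∈ R, M.Indep (insert v (S.erase x)) := by
  by_contra! hnone
  have hS' : M.Indep (S.erase x) := M.indep_mono hedge (subset_insert u _)
  have hrank_le : M.rank (S.erase x ∪ R) ≤ (S.erase x).card := by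
    refine FinMatroid.rank_le_card_of_maximal hS' subset_union_left fun v hv hvS' => ?_
    exact hnone v ((mem_union.mp hv).resolve_left hvS')
  have hrank_ge : (insert u (S.erase x)).card ≤ M.rank (S.erase x ∪ R ∪ {u}) :=
    FinMatroid.card_le_rank_s15 hedge
      (insert_subset (by simp) (subset_union_left.trans subset_union_left))
  rw [card_insert_of_notMem fun h => huS (mem_of_mem_erase h)] at hrank_ge
  omega

/-- If `u` is spanned by `(S \ {x}) ∪ R` and `(S \ {x}) ∪ {u}` is independent,
then some `v ∈ R` also satisfies that `(S \ {x}) ∪ {v}` is independent. -/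
theorem span_exchange (M : FinMatroid α) (S : Finset α) (hS : M.Indep S)
    (x : α) (hx : x ∈ S) (u : α) (huE : u ∈ M.E) (huS : u ∉ S)
    (hedge : M.Indep (insert u (S.erase x)))
    (R : Finset α) (hR : R ⊆ M.E \ S)
    (hspan : M.rank (S.erase x ∪ R ∪ {u}) = M.rank (S.erase x ∪ R)) :
    ∃ v ∈ R, M.Indep (insert v (S.erase x)) :=
  span_exchange_general M S x u huS hedge R hspan
end
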